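/- For Re(s) > 1 and x ∈ ℂ \ (−∞,0], the Lewis–Zagier function ψ⁺_s(x) := ∑*_{m,n≥0} 1/(mx+n)^{2s} (where the term m=n=0 is omitted and terms with m=0 or n=0 are counted with weight 1/2) equals ∑_{n=1}^∞ (ζ(2s, nx) − (1/2)(nx)^{−2s} + (nx)^{1−2s}/(1−2s)) + (1/2)ζ(2s) + x^{1−2s}·ζ(2s−1)/(2s−1), where ζ(s,a) is the Hurwitz zeta function. -/

import Mathlib

/-!
The double series converges absolutely: `‖m x + n‖ ≥ Re (m x + n) ≥ min (Re x) 1 * (m + n)`, and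
`(m + n + 1)² ≥ (m + 1)(n + 1)` dominates it by a product of two `p`-series with `p = Re s > 1`.
Summing over `n` first, the row `m = 0` gives `ζ(2s)/2` and the row `m = k + 1` gives
`ζ(2s, (k + 1) x) − ((k + 1) x)^(-2s)/2`. The added terms `((k + 1) x)^(1-2s)/(1-2s)` sum to
`x^(1-2s) ζ(2s-1)/(1-2s)`, which cancels the last term.
-/

open MeasureTheory Set

/-- Weight for the starred double sum: the term `m = n = 0` is omitted and the terms with
`m = 0` or `n = 0` are counted with multiplicity `1/2`. -/
noncomputable def starWeight (m n : ℕ) : ℂ :=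
  if m = 0 ∧ n = 0 then 0 else if m = 0 ∨ n = 0 then 1 / 2 else 1

/-- The Lewis–Zagier function `ψ⁺ₛ`. -/
noncomputable def psiPlus (s x : ℂ) : ℂ :=
  ∑' mn : ℕ × ℕ, starWeight mn.1 mn.2 / ((mn.1 : ℂ) * x + (mn.2 : ℂ)) ^ (2 * s)

/-- The Hurwitz zeta function `ζ(s, a)` as a series, for `Re(s) > 1`. -/
noncomputable def hurwitzZetaSeries (s a : ℂ) : ℂ := ∑' m : ℕ, 1 / ((m : ℂ) + a) ^ s

open Complex
open scoped Real

namespace Complex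

lemma ofReal_mul_cpow {r : ℝ} (hr : 0 ≤ r) (z w : ℂ) : ((r : ℂ) * z) ^ w = (r : ℂ) ^ w * z ^ w := by
  rcases eq_or_ne w 0 with rfl | hw
  · simp
  rcases hr.eq_or_lt with rfl | hr
  · simp [zero_cpow hw]
  rcases eq_or_ne z 0 with rfl | hz
  · simp [zero_cpow hw]
  have hr' : (r : ℂ) ≠ 0 := ofReal_ne_zero.mpr hr.ne'
  rw [cpow_def_of_ne_zero (mul_ne_zero hr' hz), cpow_def_of_ne_zero hr', cpow_def_of_ne_zero hz,
    log_ofReal_mul hr hz, ← ofReal_log hr.le, add_mul, exp_add]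

lemma norm_cpow_le_exp_mul_rpow (z w : ℂ) : ‖z ^ w‖ ≤ Real.exp (π * |w.im|) * ‖z‖ ^ w.re := by
  refine (norm_cpow_le z w).trans ?_
  rw [div_eq_mul_inv, ← Real.exp_neg, mul_comm]
  gcongr
  calc -(arg z * w.im) ≤ |arg z * w.im| := neg_le_abs _
    _ = |arg z| * |w.im| := abs_mul _ _
    _ ≤ π * |w.im| := by gcongr; exact abs_arg_le_pi z

end Complex

lemma min_re_one_mul_le_norm_natCast_mul_add (x : ℂ) (m n : ℕ) :
    min x.re 1 * (m + n) ≤ ‖(m : ℂ) * x + n‖ :=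
  calc min x.re 1 * (m + n) = m * min x.re 1 + n * min x.re 1 := by ring
    _ ≤ m * x.re + n * 1 := by gcongr <;> simp
    _ = ((m : ℂ) * x + n).re := by simp
    _ ≤ ‖(m : ℂ) * x + n‖ := re_le_norm _

lemma add_add_one_rpow_neg_le {a b σ : ℝ} (ha : 0 ≤ a) (hb : 0 ≤ b) (hσ : 0 ≤ σ) :
    (a + b + 1) ^ (-σ) ≤ (a + 1) ^ (-(σ / 2)) * (b + 1) ^ (-(σ / 2)) := by
  rw [← Real.mul_rpow (by positivity) (by positivity), show -σ = 2 * -(σ / 2) by ring,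
    Real.rpow_mul (by positivity), Real.rpow_two]
  exact Real.rpow_le_rpow_of_nonpos (by positivity) (by nlinarith) (by linarith)

lemma norm_one_div_natCast_mul_add_cpow_le {x w : ℂ} (hx : 0 < x.re) (hw : 0 < w.re) (m n : ℕ) :
    ‖1 / ((m : ℂ) * x + n) ^ w‖ ≤ Real.exp (π * |w.im|) * (min x.re 1 / 2) ^ (-w.re) *
      (((m : ℝ) + 1) ^ (-(w.re / 2)) * ((n : ℝ) + 1) ^ (-(w.re / 2))) := by
  have hc : 0 < min x.re 1 := lt_min hx one_pos
  rcases Nat.eq_zero_or_pos (m + n) with hmn | hmn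
  · obtain ⟨rfl, rfl⟩ := Nat.add_eq_zero_iff.mp hmn
    simp only [CharP.cast_eq_zero, zero_mul, add_zero, zero_cpow (ne_zero_of_re_pos hw), div_zero,
      norm_zero]
    positivity
  have hmn : (1 : ℝ) ≤ m + n := by exact_mod_cast hmn
  have hlow : min x.re 1 / 2 * (m + n + 1) ≤ ‖(m : ℂ) * x + n‖ :=
    calc min x.re 1 / 2 * (m + n + 1) ≤ min x.re 1 * (m + n) := by nlinarith
      _ ≤ _ := min_re_one_mul_le_norm_natCast_mul_add x m n
  calc ‖1 / ((m : ℂ) * x + n) ^ w‖ = ‖((m : ℂ) * x + n) ^ (-w)‖ := by rw [cpow_neg, one_div]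
    _ ≤ Real.exp (π * |w.im|) * ‖(m : ℂ) * x + n‖ ^ (-w.re) := by
      simpa using norm_cpow_le_exp_mul_rpow _ (-w)
    _ ≤ Real.exp (π * |w.im|) * (min x.re 1 / 2 * (m + n + 1)) ^ (-w.re) :=
      mul_le_mul_of_nonneg_left
        (Real.rpow_le_rpow_of_nonpos (by positivity) hlow (neg_nonpos.mpr hw.le)) (by positivity)
    _ = Real.exp (π * |w.im|) * (min x.re 1 / 2) ^ (-w.re) * (m + n + 1) ^ (-w.re) := by
      rw [Real.mul_rpow (by positivity) (by positivity), mul_assoc]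
    _ ≤ _ := by
      gcongr
      exact add_add_one_rpow_neg_le m.cast_nonneg n.cast_nonneg hw.le

lemma summable_norm_one_div_natCast_mul_add_cpow {x w : ℂ} (hx : 0 < x.re) (hw : 2 < w.re) :
    Summable fun p : ℕ × ℕ => ‖1 / ((p.1 : ℂ) * x + p.2) ^ w‖ := by
  have h : Summable fun n : ℕ => ((n : ℝ) + 1) ^ (-(w.re / 2)) := by
    simpa using (summable_nat_add_iff 1).mpr (Real.summable_nat_rpow.mpr (by linarith))
  have hnonneg : 0 ≤ fun n : ℕ => ((n : ℝ) + 1) ^ (-(w.re / 2)) := fun n => by positivity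
  refine Summable.of_nonneg_of_le (fun _ => norm_nonneg _)
    (fun p => norm_one_div_natCast_mul_add_cpow_le hx (by linarith) p.1 p.2) ?_
  exact (h.mul_of_nonneg h hnonneg hnonneg).mul_left _

lemma norm_starWeight_le_one (m n : ℕ) : ‖starWeight m n‖ ≤ 1 := by
  unfold starWeight
  split_ifs <;> norm_num

noncomputable def psiPlusTerm (w x : ℂ) (m n : ℕ) : ℂ :=
  starWeight m n / ((m : ℂ) * x + n) ^ w

lemma summable_psiPlusTerm {x w : ℂ} (hx : 0 < x.re) (hw : 2 < w.re) :
    Summable fun p : ℕ × ℕ => psiPlusTerm w x p.1 p.2 := by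
  refine Summable.of_norm_bounded (summable_norm_one_div_natCast_mul_add_cpow hx hw) fun p => ?_
  rw [psiPlusTerm, div_eq_mul_one_div, norm_mul]
  exact mul_le_of_le_one_left (norm_nonneg _) (norm_starWeight_le_one _ _)

lemma tsum_psiPlusTerm_zero {w : ℂ} (hw : 1 < w.re) (x : ℂ) :
    ∑' n, psiPlusTerm w x 0 n = 1 / 2 * riemannZeta w := by
  have hterm (n : ℕ) : psiPlusTerm w x 0 n = 1 / 2 * (1 / (n : ℂ) ^ w) := by
    rcases n with _ | n
    · simp [psiPlusTerm, starWeight, ne_zero_of_one_lt_re hw]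
    · simp [psiPlusTerm, starWeight, div_eq_mul_inv]
  rw [tsum_congr hterm, tsum_mul_left, zeta_eq_tsum_one_div_nat_cpow hw]

lemma tsum_psiPlusTerm_succ {w x : ℂ} (k : ℕ) (h : Summable fun n => psiPlusTerm w x (k + 1) n) :
    ∑' n, psiPlusTerm w x (k + 1) n =
      hurwitzZetaSeries w ((k + 1) * x) - 1 / 2 * ((k + 1) * x) ^ (-w) := by
  set a : ℂ := (k + 1) * x
  have hterm (n : ℕ) : psiPlusTerm w x (k + 1) (n + 1) = 1 / (((n + 1 : ℕ) : ℂ) + a) ^ w := by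
    simp [psiPlusTerm, starWeight, a, add_comm]
  have hH : Summable fun n : ℕ => 1 / ((n : ℂ) + a) ^ w :=
    (summable_nat_add_iff 1).mp (((summable_nat_add_iff 1).mpr h).congr hterm)
  have hzero : psiPlusTerm w x (k + 1) 0 = 1 / 2 * (1 / a ^ w) := by
    simp [psiPlusTerm, starWeight, a, div_eq_mul_inv]
  rw [h.tsum_eq_zero_add, hurwitzZetaSeries, hH.tsum_eq_zero_add, tsum_congr hterm, hzero,
    Nat.cast_zero, zero_add, cpow_neg]
  ring

lemma hasSum_psiPlus_sub_half_riemannZeta {s x : ℂ} (hs : 1 < s.re) (hx : 0 < x.re) :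
    HasSum
      (fun k : ℕ => hurwitzZetaSeries (2 * s) ((k + 1) * x) - 1 / 2 * ((k + 1) * x) ^ (-(2 * s)))
      (psiPlus s x - 1 / 2 * riemannZeta (2 * s)) := by
  have hw : 2 < (2 * s).re := by simpa using hs
  have hsum := summable_psiPlusTerm hx hw
  have hrows := hsum.prod.hasSum
  rw [← hsum.tsum_prod, ← hasSum_nat_add_iff' 1] at hrows
  simp only [Finset.range_one, Finset.sum_singleton, tsum_psiPlusTerm_zero (by linarith) x] at hrows
  exact hrows.congr_fun fun k => (tsum_psiPlusTerm_succ k (hsum.prod_factor (k + 1))).symm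

lemma hasSum_natCast_add_one_mul_cpow_neg {w : ℂ} (hw : 1 < w.re) (x : ℂ) :
    HasSum (fun n : ℕ => (((n : ℂ) + 1) * x) ^ (-w)) (x ^ (-w) * riemannZeta w) := by
  have hterm (n : ℕ) : (((n : ℂ) + 1) * x) ^ (-w) = x ^ (-w) * (1 / ((n : ℂ) + 1) ^ w) := by
    rw [show ((n : ℂ) + 1) = ((n + 1 : ℝ) : ℂ) by push_cast; rfl, ofReal_mul_cpow (by positivity),
      cpow_neg, one_div, mul_comm]
  rw [zeta_eq_tsum_one_div_nat_add_one_cpow hw, funext hterm]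
  have hsum : Summable fun n : ℕ => 1 / ((n : ℂ) + 1) ^ w := by
    exact_mod_cast (summable_nat_add_iff 1).mpr (summable_one_div_nat_cpow.mpr hw)
  exact hsum.hasSum.mul_left _

theorem psiPlus_eq_hurwitz_sum (s x : ℂ) (hs : 1 < s.re) (hx : 0 < x.re) :
    psiPlus s x =
      (∑' n : ℕ, (hurwitzZetaSeries (2 * s) ((n + 1) * x) -
          (1 / 2) * ((n + 1 : ℂ) * x) ^ (-(2 * s)) +
          ((n + 1 : ℂ) * x) ^ (1 - 2 * s) / (1 - 2 * s))) +
        (1 / 2) * riemannZeta (2 * s) +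
        x ^ (1 - 2 * s) * riemannZeta (2 * s - 1) / (2 * s - 1) := by
  have hs' : 1 < (2 * s - 1).re := by simpa using (by linarith : 1 < 2 * s.re - 1)
  have hzeta := (hasSum_natCast_add_one_mul_cpow_neg hs' x).div_const (1 - 2 * s)
  rw [neg_sub] at hzeta
  rw [((hasSum_psiPlus_sub_half_riemannZeta hs hx).add hzeta).tsum_eq, ← neg_sub (2 * s) 1, div_neg]
  ring
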